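/- arXiv:2206.11411 — 3 statements merged into one kernel-verified Lean document; each statement's English description precedes it below -/
import Mathlib

section
/- Let L be a k×k real matrix with the strong Perron–Frobenius property with dominant eigenvalue τ that moreover satisfies the Pisot condition, let x_0 ∈ ℝ^k be cyclic for L with every entry of L^n · x_0 strictly positive for every n ≥ 0, and let P be a k×k real matrix with nonnegative entries whose i-th row is not identically zero; set C_n := P · M_n where M_n are the coding matrices generated by L and x_0. Then for any column indices j, j' ∈ {0, …, k−1}, the length of the checking range tends to zero: C_n(i,j') · ( max over l of (M_n(l,j)/M_n(l,j')) − min over l of (M_n(l,j)/M_n(l,j')) ) → 0 as n → ∞. -/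
/-!
Write `χ = (X - τ) q` for the characteristic polynomial of `L`, with `q(τ) ≠ 0`. Since
`X - τ` and `q` are coprime, `x₀ = v + w` with `v` a `τ`-eigenvector and `q(L) w = 0`. All
complex roots of `q` are smaller than `min 1 τ` in modulus, so `Lⁿ w` decays geometrically
both absolutely and relative to `τⁿ`: `Lⁿ x₀ = τⁿ v + o(1)` and `Lⁿ x₀ / τⁿ → v`. Cyclicity
writes the positive Perron vector as `p(L) x₀`, which forces it to be `p(τ) v`; hence no entry
of `v` vanishes. Consequently every ratio `Mₙ(l,j) / Mₙ(l,j')` equals `τ^(j'-j)` up to an error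
`o(τ⁻ⁿ)`, while `Cₙ(i,j') = O(τⁿ)`.
-/

open Matrix Polynomial Filter Topology

def StrongPerronFrobenius {k : ℕ} (L : Matrix (Fin k) (Fin k) ℝ) (τ : ℝ) : Prop :=
  0 < τ ∧
  L.charpoly.rootMultiplicity τ = 1 ∧
  (∀ z : ℂ, (L.charpoly.map (algebraMap ℝ ℂ)).IsRoot z → z ≠ (τ : ℂ) →
    ‖z‖ < τ) ∧
  ∃ u : Fin k → ℝ, (∀ i, 0 < u i) ∧ L.mulVec u = τ • u

def IsCyclicVec {k : ℕ} (L : Matrix (Fin k) (Fin k) ℝ) (x0 : Fin k → ℝ) : Prop :=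
  Submodule.span ℝ (Set.range fun j : Fin k => (L ^ (j : ℕ)).mulVec x0) = ⊤

noncomputable def codingMatrix {k : ℕ} (L : Matrix (Fin k) (Fin k) ℝ)
    (x0 : Fin k → ℝ) (n : ℕ) : Matrix (Fin k) (Fin k) ℝ :=
  Matrix.of fun (i j : Fin k) => (L ^ (n + (k - 1 - (j : ℕ)))).mulVec x0 i

theorem Module.End.exists_norm_pow_apply_le_of_aeval_multiset_prod_eq_zero {𝕜 E : Type*}
    [NormedField 𝕜] [SeminormedAddCommGroup E] [NormedSpace 𝕜 E] (f : Module.End 𝕜 E)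
    {ρ : ℝ} (s : Multiset 𝕜) (hs : ∀ z ∈ s, ‖z‖ < ρ) {w : E}
    (hw : aeval f (s.map fun z => X - C z).prod w = 0) :
    ∃ C, ∀ n, ‖(f ^ n) w‖ ≤ C * ρ ^ n := by
  induction s using Multiset.induction_on generalizing w with
  | empty => exact ⟨0, fun n => by simp_all⟩
  | cons z s ih =>
    set v := aeval f (X - C z) w
    have hfw : f w = v + z • w := by simp [v]
    obtain ⟨C₁, hC₁⟩ := ih (fun y hy => hs y (Multiset.mem_cons_of_mem hy)) (w := v) <| by
      rw [← Module.End.mul_apply, ← map_mul, mul_comm, ← hw, Multiset.map_cons,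
        Multiset.prod_cons]
    have hz : ‖z‖ < ρ := hs z (Multiset.mem_cons_self z s)
    set M := max ‖w‖ (C₁ / (ρ - ‖z‖))
    have hC₁M : C₁ ≤ (ρ - ‖z‖) * M := (div_le_iff₀' (sub_pos.2 hz)).1 (le_max_right _ _)
    refine ⟨M, fun n => ?_⟩
    -- `M` is chosen so that `C₁ ρⁿ + ‖z‖ M ρⁿ ≤ M ρⁿ⁺¹`
    induction n with
    | zero => simp [M]
    | succ n ihn =>
      have hρ : 0 ≤ ρ ^ n := pow_nonneg ((norm_nonneg z).trans hz.le) n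
      calc ‖(f ^ (n + 1)) w‖ = ‖(f ^ n) v + z • (f ^ n) w‖ := by
            rw [pow_succ, Module.End.mul_apply, hfw, map_add, map_smul]
        _ ≤ C₁ * ρ ^ n + ‖z‖ * (M * ρ ^ n) :=
            (norm_add_le _ _).trans (add_le_add (hC₁ n) (by rw [norm_smul]; gcongr))
        _ ≤ (ρ - ‖z‖) * M * ρ ^ n + ‖z‖ * (M * ρ ^ n) := by gcongr
        _ = M * ρ ^ (n + 1) := by ring

theorem Module.End.exists_norm_pow_apply_le_of_aeval_eq_zero {E : Type*}
    [SeminormedAddCommGroup E] [NormedSpace ℂ E] (f : Module.End ℂ E) {ρ : ℝ} {p : ℂ[X]}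
    (hp : p ≠ 0) (hroots : ∀ z ∈ p.roots, ‖z‖ < ρ) {w : E} (hw : aeval f p w = 0) :
    ∃ C, ∀ n, ‖(f ^ n) w‖ ≤ C * ρ ^ n := by
  refine Module.End.exists_norm_pow_apply_le_of_aeval_multiset_prod_eq_zero f p.roots hroots ?_
  rw [← C_leadingCoeff_mul_prod_multiset_X_sub_C (p := p) IsAlgClosed.card_roots_eq_natDegree,
    map_mul, aeval_C, Module.End.mul_apply, Module.algebraMap_end_apply] at hw
  exact (smul_eq_zero.1 hw).resolve_left (leadingCoeff_ne_zero.2 hp)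

section RealMatrix

variable {ι : Type*} [Fintype ι] [DecidableEq ι]

theorem Matrix.exists_norm_pow_mulVec_le_of_aeval_mulVec_eq_zero (L : Matrix ι ι ℝ) {ρ : ℝ}
    {q : ℝ[X]} (hq : q ≠ 0) (hroots : ∀ z ∈ (q.map (algebraMap ℝ ℂ)).roots, ‖z‖ < ρ)
    {w : ι → ℝ} (hw : aeval L q *ᵥ w = 0) :
    ∃ C, ∀ n, ‖L ^ n *ᵥ w‖ ≤ C * ρ ^ n := by
  let Ψ : Matrix ι ι ℝ →ₐ[ℝ] Module.End ℂ (ι → ℂ) :=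
    ((toLinAlgEquiv' (R := ℂ)).toAlgHom.restrictScalars ℝ).comp (Algebra.ofId ℝ ℂ).mapMatrix
  have hΨ : ∀ M x, Ψ M (Complex.ofReal ∘ x) = Complex.ofReal ∘ (M *ᵥ x) := fun M x => by
    ext l
    simp [Ψ, toLinAlgEquiv'_apply, mulVec, dotProduct]
  obtain ⟨C, hC⟩ := Module.End.exists_norm_pow_apply_le_of_aeval_eq_zero (Ψ L)
    (map_ne_zero hq) hroots (w := Complex.ofReal ∘ w) <| by
      rw [aeval_map_algebraMap, aeval_algHom_apply, hΨ, hw]; rfl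
  refine ⟨C, fun n => (pi_norm_le_iff_of_nonneg ((norm_nonneg _).trans (hC n))).2 fun l => ?_⟩
  have h := (norm_le_pi_norm _ l).trans (hC n)
  rwa [← map_pow, hΨ, Function.comp_apply, Complex.norm_real] at h

theorem Matrix.tendsto_inv_pow_smul_pow_mulVec_of_aeval_mulVec_eq_zero (L : Matrix ι ι ℝ)
    {s : ℝ} (hs : 0 < s) {q : ℝ[X]} (hq : q ≠ 0)
    (hroots : ∀ z ∈ (q.map (algebraMap ℝ ℂ)).roots, ‖z‖ < s) {w : ι → ℝ}
    (hw : aeval L q *ᵥ w = 0) :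
    Tendsto (fun n => (s ^ n)⁻¹ • (L ^ n *ᵥ w)) atTop (𝓝 0) := by
  have hevent : ∀ᶠ ρ in 𝓝[<] s,
      (∀ z ∈ (q.map (algebraMap ℝ ℂ)).roots.toFinset, ‖z‖ < ρ) ∧ ρ ∈ Set.Ioo 0 s :=
    ((Finset.eventually_all _).2 fun z hz => nhdsWithin_le_nhds
      (eventually_gt_nhds (hroots z (Multiset.mem_toFinset.1 hz)))).and (Ioo_mem_nhdsLT hs)
  obtain ⟨ρ, hρroots, hρ⟩ := hevent.exists
  obtain ⟨C, hC⟩ := L.exists_norm_pow_mulVec_le_of_aeval_mulVec_eq_zero hq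
    (fun z hz => hρroots z (Multiset.mem_toFinset.2 hz)) hw
  have hgeom : Tendsto (fun n => C * (ρ / s) ^ n) atTop (𝓝 0) := by
    simpa using (tendsto_pow_atTop_nhds_zero_of_lt_one (div_pos hρ.1 hs).le
      ((div_lt_one hs).2 hρ.2)).const_mul C
  refine squeeze_zero_norm (fun n => ?_) hgeom
  rw [norm_smul, norm_inv, norm_pow, Real.norm_of_nonneg hs.le, div_pow, mul_div_assoc',
    inv_mul_eq_div]
  exact div_le_div_of_nonneg_right (hC n) (pow_nonneg hs.le n)

end RealMatrix

section Eigen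

variable {K ι : Type*} [Field K] [Fintype ι] [DecidableEq ι]

theorem Matrix.aeval_mulVec_of_mulVec_eq_smul {L : Matrix ι ι K} {μ : K} {v : ι → K}
    (h : L *ᵥ v = μ • v) (p : K[X]) : aeval L p *ᵥ v = p.eval μ • v := by
  have := Module.End.aeval_apply_of_mem_apply_eq_smul (f := toLinAlgEquiv' L) (p := p) h
  rwa [aeval_algEquiv] at this

theorem Matrix.exists_eigen_add_of_rootMultiplicity_charpoly_eq_one {L : Matrix ι ι K} {τ : K}
    (hmult : L.charpoly.rootMultiplicity τ = 1) (x : ι → K) :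
    ∃ q : K[X], L.charpoly = (X - C τ) * q ∧ q.eval τ ≠ 0 ∧
      ∃ v w, x = v + w ∧ L *ᵥ v = τ • v ∧ aeval L q *ᵥ w = 0 := by
  obtain ⟨q, hχ, hqτ⟩ : ∃ q, L.charpoly = (X - C τ) * q ∧ ¬ (X - C τ) ∣ q := by
    simpa [hmult] using
      L.charpoly.exists_eq_pow_rootMultiplicity_mul_and_not_dvd (charpoly_monic L).ne_zero τ
  let f := toLinAlgEquiv' L
  have hsplit : x ∈ LinearMap.ker (aeval f (X - C τ)) ⊔ LinearMap.ker (aeval f q) := by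
    rw [sup_ker_aeval_eq_ker_aeval_mul_of_coprime f
      ((irreducible_X_sub_C τ).coprime_iff_not_dvd.2 hqτ), ← hχ, aeval_algEquiv]
    simp [aeval_self_charpoly]
  obtain ⟨v, hv, w, hw, rfl⟩ := Submodule.mem_sup.1 hsplit
  refine ⟨q, hχ, fun h => hqτ (dvd_iff_isRoot.2 h), v, w, rfl, ?_, ?_⟩
  · simpa [f, toLinAlgEquiv'_apply, sub_eq_zero] using hv
  · simpa [f, aeval_algEquiv, toLinAlgEquiv'_apply] using hw

theorem Matrix.eq_eval_smul_of_aeval_mulVec_add_eq {L : Matrix ι ι K} {τ : K} {p q : K[X]}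
    (hqτ : q.eval τ ≠ 0) {u v w : ι → K} (hLv : L *ᵥ v = τ • v) (hw : aeval L q *ᵥ w = 0)
    (hLu : L *ᵥ u = τ • u) (hp : aeval L p *ᵥ (v + w) = u) : u = p.eval τ • v := by
  have hy : aeval L p *ᵥ w = u - p.eval τ • v := by
    rw [← hp, mulVec_add, aeval_mulVec_of_mulVec_eq_smul hLv, add_sub_cancel_left]
  -- `p(L) w` is a `τ`-eigenvector killed by `q(L)`, and `q(τ) ≠ 0`
  have hy0 : aeval L p *ᵥ w = 0 := by
    have hLy : L *ᵥ (aeval L p *ᵥ w) = τ • (aeval L p *ᵥ w) := by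
      rw [hy, mulVec_sub, mulVec_smul, hLv, hLu, smul_sub, smul_comm]
    have h := aeval_mulVec_of_mulVec_eq_smul hLy q
    rw [mulVec_mulVec, ← map_mul, mul_comm, map_mul, ← mulVec_mulVec, hw, mulVec_zero,
      eq_comm, smul_eq_zero] at h
    exact h.resolve_left hqτ
  rwa [hy0, eq_comm, sub_eq_zero] at hy

end Eigen

theorem IsCyclicVec.exists_aeval_mulVec_eq {k : ℕ} {L : Matrix (Fin k) (Fin k) ℝ}
    {x0 : Fin k → ℝ} (hx0 : IsCyclicVec L x0) (y : Fin k → ℝ) :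
    ∃ p : ℝ[X], aeval L p *ᵥ x0 = y := by
  obtain ⟨c, hc⟩ :=
    (Submodule.mem_span_range_iff_exists_fun ℝ).1 (hx0 ▸ Submodule.mem_top (x := y))
  refine ⟨∑ j : Fin k, monomial j (c j), ?_⟩
  simp [← hc, map_sum, sum_mulVec, aeval_monomial, ← Algebra.smul_def, smul_mulVec]

theorem IsCyclicVec.exists_tendsto_inv_pow_smul_pow_mulVec_sub {k : ℕ}
    {L : Matrix (Fin k) (Fin k) ℝ} {x0 : Fin k → ℝ} (hx0 : IsCyclicVec L x0) {τ : ℝ}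
    (hmult : L.charpoly.rootMultiplicity τ = 1) {u : Fin k → ℝ} (hu : ∀ l, u l ≠ 0)
    (hLu : L *ᵥ u = τ • u) :
    ∃ v : Fin k → ℝ, (∀ l, v l ≠ 0) ∧ ∀ s, 0 < s →
      (∀ z : ℂ, (L.charpoly.map (algebraMap ℝ ℂ)).IsRoot z → z ≠ τ → ‖z‖ < s) →
      Tendsto (fun n => (s ^ n)⁻¹ • (L ^ n *ᵥ x0 - τ ^ n • v)) atTop (𝓝 0) := by
  obtain ⟨q, hχ, hqτ, v, w, rfl, hLv, hw⟩ :=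
    exists_eigen_add_of_rootMultiplicity_charpoly_eq_one hmult x0
  have hq0 : q ≠ 0 := by rintro rfl; simp at hqτ
  obtain ⟨p, hp⟩ := hx0.exists_aeval_mulVec_eq u
  have hu' := eq_eval_smul_of_aeval_mulVec_add_eq hqτ hLv hw hLu hp
  refine ⟨v, fun l hl => hu l (by simp [hu', hl]), fun s hs hroots => ?_⟩
  have hqroots : ∀ z ∈ (q.map (algebraMap ℝ ℂ)).roots, ‖z‖ < s := fun z hz => by
    have hz := (mem_roots (map_ne_zero hq0)).1 hz
    refine hroots z (by rw [hχ, Polynomial.map_mul]; simp [hz.eq_zero]) fun hzτ => hqτ ?_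
    rw [IsRoot, hzτ, eval_map_algebraMap, ← Complex.coe_algebraMap, aeval_algebraMap_apply,
      Complex.coe_algebraMap, Complex.ofReal_eq_zero] at hz
    simpa using hz
  have hpow : ∀ n, L ^ n *ᵥ v = τ ^ n • v := fun n => by
    simpa using aeval_mulVec_of_mulVec_eq_smul hLv (X ^ n)
  refine (L.tendsto_inv_pow_smul_pow_mulVec_of_aeval_mulVec_eq_zero hs hq0 hqroots hw).congr
    fun n => ?_
  rw [mulVec_add, hpow, add_sub_cancel_left]

theorem abs_iSup_sub_iInf_le {ι : Type*} [Fintype ι] [Nonempty ι] (f : ι → ℝ) (r : ℝ) :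
    |(⨆ l, f l) - ⨅ l, f l| ≤ 2 * ∑ l, |f l - r| := by
  have hdev : ∀ l, |f l - r| ≤ ∑ l, |f l - r| := fun l =>
    Finset.single_le_sum (fun l _ => abs_nonneg (f l - r)) (Finset.mem_univ l)
  have hsup : (⨆ l, f l) ≤ r + ∑ l, |f l - r| :=
    ciSup_le fun l => by linarith [le_abs_self (f l - r), hdev l]
  have hinf : r - ∑ l, |f l - r| ≤ ⨅ l, f l :=
    le_ciInf fun l => by linarith [neg_abs_le (f l - r), hdev l]
  have hle : (⨅ l, f l) ≤ ⨆ l, f l :=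
    ciInf_le_ciSup (Set.finite_range f).bddBelow (Set.finite_range f).bddAbove
  rw [abs_of_nonneg (sub_nonneg.2 hle)]
  linarith

theorem tendsto_mul_iSup_sub_iInf_div {ι : Type*} [Fintype ι] [Nonempty ι] {c g : ℕ → ℝ}
    {x y : ℕ → ι → ℝ} {γ r : ℝ} {β : ι → ℝ}
    (hc : Tendsto (fun n => c n / g n) atTop (𝓝 γ))
    (hy : ∀ l, Tendsto (fun n => y n l / g n) atTop (𝓝 (β l))) (hβ : ∀ l, β l ≠ 0)
    (hxy : ∀ l, Tendsto (fun n => x n l - r * y n l) atTop (𝓝 0)) :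
    Tendsto (fun n => c n * ((⨆ l, x n l / y n l) - ⨅ l, x n l / y n l)) atTop (𝓝 0) := by
  have hne : ∀ l, ∀ᶠ n in atTop, y n l ≠ 0 ∧ g n ≠ 0 := fun l =>
    ((hy l).eventually_ne (hβ l)).mono fun n hn => div_ne_zero_iff.1 hn
  have hdev : ∀ l, Tendsto (fun n => g n * (x n l / y n l - r)) atTop (𝓝 0) := fun l => by
    refine (zero_div (β l) ▸ (hxy l).div (hy l) (hβ l)).congr' ?_
    filter_upwards [hne l] with n hn
    simp only [Pi.div_apply]
    field_simp [hn.1, hn.2]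
  have hbound : Tendsto (fun n => 2 * |c n / g n| * ∑ l, |g n * (x n l / y n l - r)|) atTop
      (𝓝 0) := by
    simpa using (hc.abs.const_mul 2).mul (tendsto_finsetSum _ fun l _ => (hdev l).abs)
  refine squeeze_zero_norm' ?_ hbound
  obtain ⟨l₀⟩ := ‹Nonempty ι›
  filter_upwards [hne l₀] with n hn
  calc ‖c n * ((⨆ l, x n l / y n l) - ⨅ l, x n l / y n l)‖
      ≤ |c n| * (2 * ∑ l, |x n l / y n l - r|) := by
        rw [Real.norm_eq_abs, abs_mul]; gcongr; exact abs_iSup_sub_iInf_le _ r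
    _ = 2 * |c n / g n| * ∑ l, |g n * (x n l / y n l - r)| := by
        simp_rw [abs_mul, ← Finset.mul_sum, abs_div]
        field_simp [abs_ne_zero.2 hn.2]

theorem tendsto_mul_iSup_sub_iInf_shift_div {ι : Type*} [Fintype ι] [Nonempty ι]
    {X : ℕ → ι → ℝ} {v : ι → ℝ} {τ : ℝ} (hτ : 0 < τ) (hv : ∀ l, v l ≠ 0)
    (hdom : Tendsto (fun n => (τ ^ n)⁻¹ • X n) atTop (𝓝 v))
    (hpisot : Tendsto (fun n => X n - τ ^ n • v) atTop (𝓝 0)) (p : ι → ℝ) (a b : ℕ) :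
    Tendsto (fun n => (∑ l, p l * X (n + b) l) *
      ((⨆ l, X (n + a) l / X (n + b) l) - ⨅ l, X (n + a) l / X (n + b) l)) atTop (𝓝 0) := by
  have hy : ∀ l, Tendsto (fun n => X (n + b) l / τ ^ n) atTop (𝓝 (τ ^ b * v l)) := fun l => by
    refine (((tendsto_pi_nhds.1 hdom l).comp (tendsto_add_atTop_nat b)).const_mul
      (τ ^ b)).congr fun n => ?_
    simp only [Function.comp_apply, Pi.smul_apply, smul_eq_mul, pow_add]
    field_simp
  have hxy : ∀ l, Tendsto (fun n => X (n + a) l - τ ^ a / τ ^ b * X (n + b) l) atTop (𝓝 0) :=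
    fun l => by
      have hshift : ∀ c, Tendsto (fun n => (X (n + c) - τ ^ (n + c) • v) l) atTop (𝓝 0) :=
        fun c => (tendsto_pi_nhds.1 hpisot l).comp (tendsto_add_atTop_nat c)
      have h := (hshift a).sub ((hshift b).const_mul (τ ^ a / τ ^ b))
      rw [mul_zero, sub_zero] at h
      refine h.congr fun n => ?_
      simp only [Pi.sub_apply, Pi.smul_apply, smul_eq_mul, pow_add]
      field_simp
      ring
  have hc : Tendsto (fun n => (∑ l, p l * X (n + b) l) / τ ^ n) atTop
      (𝓝 (∑ l, p l * (τ ^ b * v l))) := by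
    simp only [Finset.sum_div, mul_div_assoc]
    exact tendsto_finsetSum _ fun l _ => (hy l).const_mul _
  exact tendsto_mul_iSup_sub_iInf_div hc hy
    (fun l => mul_ne_zero (pow_ne_zero _ hτ.ne') (hv l)) hxy

theorem checking_range_shrinks_general
    (k : ℕ) (L : Matrix (Fin k) (Fin k) ℝ) (τ : ℝ)
    (hL : StrongPerronFrobenius L τ)
    (hPisot : ∀ z : ℂ, (L.charpoly.map (algebraMap ℝ ℂ)).IsRoot z →
      z ≠ (τ : ℂ) → ‖z‖ < 1)
    (x0 : Fin k → ℝ) (hx0 : IsCyclicVec L x0)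
    (P : Matrix (Fin k) (Fin k) ℝ)
    (i : Fin k) (j j' : Fin k) :
    Tendsto
      (fun n : ℕ =>
        (P * codingMatrix L x0 n) i j' *
          ((⨆ l : Fin k, codingMatrix L x0 n l j / codingMatrix L x0 n l j') -
           (⨅ l : Fin k, codingMatrix L x0 n l j / codingMatrix L x0 n l j')))
      atTop (nhds 0) := by
  obtain ⟨hτ, hmult, hspec, u, hu, hLu⟩ := hL
  have : Nonempty (Fin k) := ⟨i⟩
  obtain ⟨v, hv, hdecay⟩ := hx0.exists_tendsto_inv_pow_smul_pow_mulVec_sub hmult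
    (fun l => (hu l).ne') hLu
  have hdom : Tendsto (fun n => (τ ^ n)⁻¹ • L ^ n *ᵥ x0) atTop (𝓝 v) := by
    simpa [smul_sub, smul_smul, hτ.ne'] using (hdecay τ hτ hspec).add_const v
  have hpisot : Tendsto (fun n => L ^ n *ᵥ x0 - τ ^ n • v) atTop (𝓝 0) := by
    simpa using hdecay 1 one_pos hPisot
  exact tendsto_mul_iSup_sub_iInf_shift_div hτ hv hdom hpisot (P i) (k - 1 - j) (k - 1 - j')

/-- under the Pisot condition (all non-dominant eigenvalues have
modulus `< 1`), the length of the checking range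
`Cₙ(i,j')·(max_l Mₙ(l,j)/Mₙ(l,j') − min_l Mₙ(l,j)/Mₙ(l,j'))` tends to `0`. -/
theorem checking_range_shrinks
    (k : ℕ) (L : Matrix (Fin k) (Fin k) ℝ) (τ : ℝ)
    (hL : StrongPerronFrobenius L τ)
    (hPisot : ∀ z : ℂ, (L.charpoly.map (algebraMap ℝ ℂ)).IsRoot z →
      z ≠ (τ : ℂ) → ‖z‖ < 1)
    (x0 : Fin k → ℝ) (hx0 : IsCyclicVec L x0)
    (hpos : ∀ n : ℕ, ∀ i : Fin k, 0 < (L ^ n).mulVec x0 i)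
    (P : Matrix (Fin k) (Fin k) ℝ) (hP : ∀ i j, 0 ≤ P i j)
    (i : Fin k) (hPi : ∃ l, P i l ≠ 0) (j j' : Fin k) :
    Tendsto
      (fun n : ℕ =>
        (P * codingMatrix L x0 n) i j' *
          ((⨆ l : Fin k, codingMatrix L x0 n l j / codingMatrix L x0 n l j') -
           (⨅ l : Fin k, codingMatrix L x0 n l j / codingMatrix L x0 n l j')))
      atTop (nhds 0) :=
  checking_range_shrinks_general k L τ hL hPisot x0 hx0 P i j j'
end

section
/- Let a_0, …, a_{k−1} be real numbers with a_0 ≠ 0, let L be the left companion matrix of these coefficients, and suppose L has the strong Perron–Frobenius property with dominant eigenvalue τ. Let S be the standard sequence of the recurrence: S_0 = S_1 = ⋯ = S_{k−2} = 0, S_{k−1} = 1, and S_{n+k} = a_{k−1}·S_{n+k−1} + ⋯ + a_1·S_{n+1} + a_0·S_n for all n ≥ 0. Then S_n ≠ 0 for all sufficiently large n, and S_{n+1}/S_n → τ as n → ∞. -/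
/-!
Cayley–Hamilton for the companion matrix, applied to the window vectors
`(S (n + k - 1), …, S n)` (which the matrix shifts by one step), shows that `S` is annihilated
by the characteristic polynomial `P = (X - τ) q` acting through the shift of sequences. Hence
`q` applied to `S` is a geometric sequence `c τ ^ n`, and `c = 1` is read off the initial
values. All roots of `q` are smaller than `τ` in modulus, so peeling them off one linear factor
at a time shows that `S n / τ ^ n` tends to `1 / q(τ) ≠ 0`, which gives the ratio limit.
-/

open Matrix Polynomial Filter

/-- The left companion matrix of coefficients `a_0, …, a_{k-1}`. -/
def leftCompanion {k : ℕ} (a : Fin k → ℝ) : Matrix (Fin k) (Fin k) ℝ :=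
  Matrix.of fun (i j : Fin k) =>
    if (i : ℕ) = 0 then a ⟨k - 1 - (j : ℕ), by have := j.isLt; omega⟩
    else if (i : ℕ) = (j : ℕ) + 1 then 1 else 0

open Topology

section SeqShift

variable {R : Type*} [CommSemiring R]

variable (R) in
def seqShift : Module.End R (ℕ → R) := LinearMap.funLeft R R (· + 1)

@[simp]
lemma seqShift_pow_apply (i : ℕ) (f : ℕ → R) (n : ℕ) : (seqShift R ^ i) f n = f (n + i) := by
  induction i generalizing f n with
  | zero => rfl
  | succ i ih => rw [pow_succ, Module.End.mul_apply, ih]; rfl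

lemma aeval_seqShift_apply' {p : R[X]} {N : ℕ} (hN : p.natDegree < N) (f : ℕ → R) (n : ℕ) :
    aeval (seqShift R) p f n = ∑ i ∈ Finset.range N, p.coeff i * f (n + i) := by
  simp [aeval_eq_sum_range' hN, LinearMap.sum_apply]

lemma aeval_seqShift_apply (p : R[X]) (f : ℕ → R) (n : ℕ) :
    aeval (seqShift R) p f n = ∑ i ∈ Finset.range (p.natDegree + 1), p.coeff i * f (n + i) :=
  aeval_seqShift_apply' (Nat.lt_succ_self _) f n

lemma aeval_seqShift_map {S : Type*} [CommSemiring S] (φ : R →+* S) (p : R[X]) (f : ℕ → R) :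
    aeval (seqShift S) (p.map φ) (φ ∘ f) = φ ∘ aeval (seqShift R) p f := by
  funext n
  have hN := (natDegree_map_le (p := p) (f := φ)).trans_lt (Nat.lt_succ_self p.natDegree)
  simp [aeval_seqShift_apply' hN, aeval_seqShift_apply, coeff_map]

lemma aeval_seqShift_pow (p : R[X]) (c : R) :
    aeval (seqShift R) p (fun n => c ^ n) = fun n => p.eval c * c ^ n := by
  funext n
  rw [aeval_seqShift_apply, eval_eq_sum_range, Finset.sum_mul]
  exact Finset.sum_congr rfl fun i _ => by ring

lemma aeval_seqShift_apply_zero_of_monic {p : R[X]} (hp : p.Monic) {f : ℕ → R}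
    (hf : ∀ i < p.natDegree, f i = 0) (hlast : f p.natDegree = 1) :
    aeval (seqShift R) p f 0 = 1 := by
  rw [aeval_seqShift_apply, Finset.sum_range_succ, Finset.sum_eq_zero fun i hi => by
    rw [zero_add, hf i (Finset.mem_range.1 hi), mul_zero]]
  simp [hp.coeff_natDegree, hlast]

lemma aeval_mulVec_apply_eq_aeval_seqShift {ι : Type*} [Fintype ι] [DecidableEq ι]
    {L : Matrix ι ι R} {w : ℕ → ι → R} (hw : ∀ n, L *ᵥ w n = w (n + 1)) (p : R[X]) (n : ℕ)
    (j : ι) : (aeval L p *ᵥ w n) j = aeval (seqShift R) p (fun m => w m j) n := by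
  have hpow : ∀ i, L ^ i *ᵥ w n = w (n + i) := by
    intro i
    induction i with
    | zero => simp
    | succ i ih => rw [pow_succ', ← mulVec_mulVec, ih, hw]; rfl
  simp [aeval_eq_sum_range, sum_mulVec, smul_mulVec, hpow, Finset.sum_apply]

end SeqShift

section SeqShiftRing

variable {R : Type*} [CommRing R]

lemma eq_mul_pow_of_aeval_seqShift_X_sub_C_eq_zero {c : R} {g : ℕ → R}
    (hg : aeval (seqShift R) (X - C c) g = 0) (n : ℕ) : g n = g 0 * c ^ n := by
  induction n with
  | zero => simp
  | succ n ih =>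
    have hstep := congrFun hg n
    simp only [map_sub, aeval_X, aeval_C, LinearMap.sub_apply, Module.algebraMap_end_apply,
      Pi.sub_apply, Pi.smul_apply, smul_eq_mul, Pi.zero_apply, sub_eq_zero] at hstep
    rw [pow_succ, ← mul_assoc, ← ih, mul_comm, ← hstep]
    rfl

lemma aeval_seqShift_charpoly_eq_zero {ι : Type*} [Fintype ι] [DecidableEq ι]
    {L : Matrix ι ι R} {w : ℕ → ι → R} (hw : ∀ n, L *ᵥ w n = w (n + 1)) (j : ι) :
    aeval (seqShift R) L.charpoly (fun m => w m j) = 0 := by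
  funext n
  rw [← aeval_mulVec_apply_eq_aeval_seqShift hw, aeval_self_charpoly, zero_mulVec]
  rfl

end SeqShiftRing

lemma leftCompanion_mulVec_window {k : ℕ} {a : Fin k → ℝ} {S : ℕ → ℝ}
    (hrec : ∀ n, S (n + k) = ∑ j : Fin k, a j * S (n + j)) (n : ℕ) :
    leftCompanion a *ᵥ (fun i => S (n + i.rev)) = fun i => S (n + 1 + i.rev) := by
  funext i
  simp only [mulVec, dotProduct, leftCompanion, of_apply]
  by_cases hi : (i : ℕ) = 0
  · have hrev (j : Fin k) : (⟨k - 1 - j, by omega⟩ : Fin k) = j.rev := by ext; simp; omega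
    simp only [hi, if_true, hrev]
    rw [show n + 1 + (i.rev : ℕ) = n + k by simp; omega, hrec]
    exact Fintype.sum_equiv Fin.revPerm _ _ fun _ => rfl
  · rw [Finset.sum_eq_single ⟨i - 1, by omega⟩]
    · rw [if_neg hi, if_pos (by simp; omega), one_mul]
      congr 1; simp; omega
    · intro j _ hj
      rw [if_neg hi, if_neg (fun h => hj (by ext; simp; omega)), zero_mul]
    · simp

lemma aeval_seqShift_charpoly_leftCompanion {k : ℕ} (hk : 1 ≤ k) {a : Fin k → ℝ} {S : ℕ → ℝ}
    (hrec : ∀ n, S (n + k) = ∑ j : Fin k, a j * S (n + j)) :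
    aeval (seqShift ℝ) (leftCompanion a).charpoly S = 0 := by
  have hrev : k - (k - 1 + 1) = 0 := by omega
  simpa [hrev] using aeval_seqShift_charpoly_eq_zero (leftCompanion_mulVec_window hrec)
    ⟨k - 1, by omega⟩

lemma Polynomial.Monic.exists_eq_X_sub_C_mul {R : Type*} [CommRing R] [IsDomain R] {p : R[X]}
    (hp : p.Monic) {a : R} (ha : p.rootMultiplicity a = 1) :
    ∃ q : R[X], q.Monic ∧ ¬ q.IsRoot a ∧ p = (X - C a) * q := by
  obtain ⟨q, hpq, hqa⟩ := p.exists_eq_pow_rootMultiplicity_mul_and_not_dvd hp.ne_zero a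
  rw [ha, pow_one] at hpq
  exact ⟨q, (monic_X_sub_C a).of_mul_monic_left (hpq ▸ hp), mt dvd_iff_isRoot.2 hqa, hpq⟩

lemma tendsto_zero_of_le_mul_add {x d : ℕ → ℝ} {r : ℝ} (hx : ∀ n, 0 ≤ x n) (hr0 : 0 ≤ r)
    (hr1 : r < 1) (hd : Tendsto d atTop (𝓝 0)) (hrec : ∀ n, x (n + 1) ≤ r * x n + d n) :
    Tendsto x atTop (𝓝 0) := by
  refine tendsto_order.2 ⟨fun b hb => .of_forall fun n => hb.trans_le (hx n), fun ε hε => ?_⟩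
  obtain ⟨N, hN⟩ := eventually_atTop.1
    (hd.eventually (gt_mem_nhds (show 0 < ε / 2 * (1 - r) by nlinarith)))
  have hbound : ∀ m, x (N + m) ≤ r ^ m * x N + ε / 2 := by
    intro m
    induction m with
    | zero => simp; positivity
    | succ m ih =>
      calc x (N + m + 1) ≤ r * x (N + m) + d (N + m) := hrec _
        _ ≤ r * (r ^ m * x N + ε / 2) + ε / 2 * (1 - r) := by
          gcongr; exact (hN _ le_self_add).le
        _ = r ^ (m + 1) * x N + ε / 2 := by ring
  have hgeom : Tendsto (fun m => r ^ m * x N) atTop (𝓝 0) := by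
    simpa using (tendsto_pow_atTop_nhds_zero_of_lt_one hr0 hr1).mul_const (x N)
  obtain ⟨M, hM⟩ := eventually_atTop.1 (hgeom.eventually (gt_mem_nhds (half_pos hε)))
  filter_upwards [eventually_ge_atTop (N + M)] with n hn
  obtain ⟨m, rfl⟩ := Nat.exists_eq_add_of_le (le_self_add.trans hn)
  linarith [hbound m, hM m (by omega)]

namespace Complex

lemma tendsto_div_pow_zero_of_succ_eq {τ : ℝ} (hτ : 0 < τ) {z : ℂ} (hz : ‖z‖ < τ) {f g : ℕ → ℂ}
    (hfg : ∀ n, f (n + 1) = z * f n + g n)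
    (hg : Tendsto (fun n => g n / (τ : ℂ) ^ n) atTop (𝓝 0)) :
    Tendsto (fun n => f n / (τ : ℂ) ^ n) atTop (𝓝 0) := by
  have hτ' : (τ : ℂ) ≠ 0 := ofReal_ne_zero.2 hτ.ne'
  have hnorm (w : ℂ) : ‖w / τ‖ = ‖w‖ / τ := by rw [norm_div, norm_real, Real.norm_of_nonneg hτ.le]
  rw [tendsto_zero_iff_norm_tendsto_zero] at hg ⊢
  refine tendsto_zero_of_le_mul_add (d := fun n => ‖g n / τ ^ n‖ / τ) (fun n => norm_nonneg _)
    (by positivity) ((div_lt_one hτ).2 hz) (by simpa using hg.div_const τ) fun n => ?_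
  have hstep : f (n + 1) / (τ : ℂ) ^ (n + 1) = z / τ * (f n / τ ^ n) + g n / τ ^ n / τ := by
    rw [hfg]; field_simp; ring
  rw [hstep]
  refine (norm_add_le _ _).trans_eq ?_
  rw [norm_mul, hnorm, hnorm]

lemma tendsto_div_pow_zero_of_aeval_seqShift_prod_eq_zero {τ : ℝ} (hτ : 0 < τ) {s : Multiset ℂ}
    (hs : ∀ z ∈ s, ‖z‖ < τ) {f : ℕ → ℂ} (hf : aeval (seqShift ℂ) (s.map (X - C ·)).prod f = 0) :
    Tendsto (fun n => f n / (τ : ℂ) ^ n) atTop (𝓝 0) := by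
  induction s using Multiset.induction_on generalizing f with
  | empty => simp_all
  | cons z s ih =>
    rw [Multiset.forall_mem_cons] at hs
    set g := aeval (seqShift ℂ) (X - C z) f
    refine tendsto_div_pow_zero_of_succ_eq hτ hs.1 (g := g) (fun n => ?_) (ih hs.2 ?_)
    · simp [g, seqShift, Module.algebraMap_end_apply]
    · rw [Multiset.map_cons, Multiset.prod_cons] at hf
      rw [← Module.End.mul_apply, ← map_mul, mul_comm, hf]

lemma tendsto_div_pow_of_aeval_seqShift_eq_pow {τ : ℝ} (hτ : 0 < τ) {p : ℂ[X]} (hp : p.Monic)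
    (hroots : ∀ z, p.IsRoot z → ‖z‖ < τ) {f : ℕ → ℂ}
    (hf : aeval (seqShift ℂ) p f = fun n => (τ : ℂ) ^ n) :
    Tendsto (fun n => f n / (τ : ℂ) ^ n) atTop (𝓝 (p.eval (τ : ℂ))⁻¹) := by
  have hpτ : p.eval (τ : ℂ) ≠ 0 := fun h => by
    simpa [Real.norm_of_nonneg hτ.le] using hroots τ h
  set c := (p.eval (τ : ℂ))⁻¹
  have hhom : aeval (seqShift ℂ) p (f - c • fun n => (τ : ℂ) ^ n) = 0 := by
    rw [map_sub, map_smul, hf, aeval_seqShift_pow]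
    funext n
    simp [c, hpτ]
  have hdecay := tendsto_div_pow_zero_of_aeval_seqShift_prod_eq_zero hτ
    (fun z hz => hroots z (isRoot_of_mem_roots hz))
    (by rwa [prod_multiset_X_sub_C_of_monic_of_roots_card_eq hp IsAlgClosed.card_roots_eq_natDegree])
  have hτn (n : ℕ) : (τ : ℂ) ^ n ≠ 0 := pow_ne_zero n (ofReal_ne_zero.2 hτ.ne')
  simpa [sub_div, hτn] using hdecay.add_const c

end Complex

lemma eval_map_algebraMap_ofReal (q : ℝ[X]) (x : ℝ) :
    (q.map (algebraMap ℝ ℂ)).eval (x : ℂ) = q.eval x := by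
  rw [eval_map]
  exact eval₂_at_apply (algebraMap ℝ ℂ) x

lemma tendsto_div_pow_of_aeval_seqShift_eq_pow {τ : ℝ} (hτ : 0 < τ) {q : ℝ[X]} (hq : q.Monic)
    (hroots : ∀ z : ℂ, (q.map (algebraMap ℝ ℂ)).IsRoot z → ‖z‖ < τ) {f : ℕ → ℝ}
    (hf : aeval (seqShift ℝ) q f = fun n => τ ^ n) :
    Tendsto (fun n => f n / τ ^ n) atTop (𝓝 (q.eval τ)⁻¹) := by
  have hfC : aeval (seqShift ℂ) (q.map (algebraMap ℝ ℂ)) (fun n => (f n : ℂ)) =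
      fun n => (τ : ℂ) ^ n := by
    rw [show (fun n => (f n : ℂ)) = algebraMap ℝ ℂ ∘ f from rfl, aeval_seqShift_map, hf]
    funext n
    simp
  have hlim := Complex.tendsto_div_pow_of_aeval_seqShift_eq_pow hτ (hq.map _) hroots hfC
  rw [eval_map_algebraMap_ofReal] at hlim
  exact tendsto_ofReal_iff.1 (by exact_mod_cast hlim)

lemma eventually_ne_zero_and_tendsto_div_of_tendsto_div_pow {𝕜 : Type*} [NormedField 𝕜]
    {f : ℕ → 𝕜} {τ c : 𝕜} (hτ : τ ≠ 0) (hc : c ≠ 0)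
    (hf : Tendsto (fun n => f n / τ ^ n) atTop (𝓝 c)) :
    (∀ᶠ n in atTop, f n ≠ 0) ∧ Tendsto (fun n => f (n + 1) / f n) atTop (𝓝 τ) := by
  have hne : ∀ᶠ n in atTop, f n ≠ 0 := (hf.eventually_ne hc).mono fun n hn h => hn (by simp [h])
  refine ⟨hne, ?_⟩
  have hlim := ((hf.comp (tendsto_add_atTop_nat 1)).div hf hc).mul_const τ
  rw [div_self hc, one_mul] at hlim
  refine hlim.congr' (hne.mono fun n hn => ?_)
  simp only [Pi.div_apply, Function.comp_apply]
  field_simp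
  ring

/-- for the standard sequence `S` of a recurrence with `a₀ ≠ 0`
whose left companion matrix is strong Perron–Frobenius with dominant eigenvalue
`τ`, the terms `Sₙ` are eventually nonzero and `S_{n+1}/Sₙ → τ`. -/
theorem standard_sequence_ratio_limit
    (k : ℕ) (hk : 1 ≤ k) (a : Fin k → ℝ)
    (τ : ℝ) (hL : StrongPerronFrobenius (leftCompanion a) τ)
    (S : ℕ → ℝ)
    (hinit : ∀ m : ℕ, m < k - 1 → S m = 0) (hlast : S (k - 1) = 1)
    (hrec : ∀ n : ℕ, S (n + k) = ∑ j : Fin k, a j * S (n + (j : ℕ))) :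
    (∀ᶠ n : ℕ in atTop, S n ≠ 0) ∧
    Tendsto (fun n : ℕ => S (n + 1) / S n) atTop (nhds τ) := by
  obtain ⟨hτ, hmult, hroots, -⟩ := hL
  obtain ⟨q, hq, hqτ, hPq⟩ := (charpoly_monic (leftCompanion a)).exists_eq_X_sub_C_mul hmult
  have hqdeg : q.natDegree = k - 1 := by
    have := congrArg natDegree hPq
    rw [charpoly_natDegree_eq_dim, Fintype.card_fin, (monic_X_sub_C τ).natDegree_mul hq,
      natDegree_X_sub_C] at this
    omega
  have hqS : aeval (seqShift ℝ) q S = fun n => τ ^ n := by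
    have hP := aeval_seqShift_charpoly_leftCompanion hk hrec
    rw [hPq, map_mul, Module.End.mul_apply] at hP
    funext n
    rw [eq_mul_pow_of_aeval_seqShift_X_sub_C_eq_zero hP,
      aeval_seqShift_apply_zero_of_monic hq (hqdeg ▸ hinit) (hqdeg ▸ hlast), one_mul]
  have hqroots (z : ℂ) (hz : (q.map (algebraMap ℝ ℂ)).IsRoot z) : ‖z‖ < τ := by
    refine hroots z (by rw [hPq, Polynomial.map_mul]; exact root_mul_left_of_isRoot _ hz) ?_
    rintro rfl
    rw [IsRoot.def, eval_map_algebraMap_ofReal, Complex.ofReal_eq_zero] at hz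
    exact hqτ hz
  exact eventually_ne_zero_and_tendsto_div_of_tendsto_div_pow hτ.ne' (inv_ne_zero hqτ)
    (tendsto_div_pow_of_aeval_seqShift_eq_pow hτ hq hqroots hqS)
end

section
/- Let L be a k×k real matrix with the strong Perron–Frobenius property with dominant eigenvalue τ, and let x_0 ∈ ℝ^k be cyclic for L. Then there exists N such that either (L^n · x_0)_i > 0 for every n ≥ N and every coordinate index i, or (L^n · x_0)_i < 0 for every n ≥ N and every coordinate index i. In other words, for large n all entries of L^n·x_0 have the same, constant, sign. -/
/-! Since `τ` is a simple root, `charpoly L = (X - τ) q` with `q(τ) ≠ 0`, and `P = q(L) / q(τ)` is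
the spectral projection onto the Perron line: `L P = τ P` and `P u = u`. As `x₀` is cyclic,
`P x₀ = c u` with `c ≠ 0`. The remainder `Lⁿ (1 - P) x₀` equals `Aⁿ (1 - P) x₀` for
`A = L (1 - P)`, which is annihilated by `X q`; so every complex eigenvalue of `A` has modulus
less than `τ`, and Gelfand's formula gives `Aⁿ (1 - P) x₀ = o(τⁿ)`. Hence `τ⁻ⁿ Lⁿ x₀ → c u`, all
of whose entries have the sign of `c`. -/

open Matrix Polynomial

open Filter Topology

theorem Polynomial.exists_eq_X_sub_C_mul_of_rootMultiplicity_eq_one {R : Type*} [CommRing R]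
    {p : R[X]} {a : R} (h : p.rootMultiplicity a = 1) :
    ∃ q, p = (X - C a) * q ∧ q.eval a ≠ 0 := by
  have hp : p ≠ 0 := by rintro rfl; simp at h
  obtain ⟨q, hpq, hq⟩ := exists_eq_pow_rootMultiplicity_mul_and_not_dvd p hp a
  rw [h, pow_one] at hpq
  exact ⟨q, hpq, fun hqa => hq (dvd_iff_isRoot.2 hqa)⟩

theorem Polynomial.sub_X_dvd_comp_sub {R : Type*} [CommRing R] (p g : R[X]) :
    g - X ∣ p.comp g - p := by
  have h := sub_dvd_eval_sub g X (p.map C)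
  rwa [eval_map, eval_map, eval₂_C_X] at h

theorem Polynomial.aeval_eq_of_dvd_sub {R A : Type*} [CommRing R] [Ring A] [Algebra R A]
    {a : A} {p f g : R[X]} (hp : aeval a p = 0) (h : p ∣ f - g) : aeval a f = aeval a g :=
  sub_eq_zero.1 (by rw [← map_sub]; exact aeval_eq_zero_of_dvd_aeval_eq_zero h hp)

theorem norm_lt_of_isRoot_map_X_mul {τ : ℝ} (hτ : 0 < τ) {q : ℝ[X]} (hq : q.eval τ ≠ 0)
    (hroots : ∀ z : ℂ, (((X - C τ) * q).map (algebraMap ℝ ℂ)).IsRoot z → z ≠ τ → ‖z‖ < τ)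
    (z : ℂ) (hz : ((X * q).map (algebraMap ℝ ℂ)).IsRoot z) : ‖z‖ < τ := by
  simp only [IsRoot, Polynomial.map_mul, eval_mul, map_X, eval_X, mul_eq_zero] at hz hroots
  rcases hz with rfl | hz
  · simpa using hτ
  refine hroots z (Or.inr hz) fun hzτ => hq ?_
  rw [hzτ, eval_map_algebraMap, ← Complex.coe_algebraMap, aeval_algebraMap_apply] at hz
  simpa using hz

section SpectralProjection

variable {K M : Type*} [Field K] [Ring M] [Algebra K M]

/-- When `aeval L ((X - C τ) * q) = 0` and `q.eval τ ≠ 0`, this is the projection onto the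
`τ`-eigenspace of `L` along the kernel of `aeval L q`. -/
noncomputable def spectralProj (L : M) (τ : K) (q : K[X]) : M :=
  aeval L ((q.eval τ)⁻¹ • q)

variable {τ : K} {q : K[X]}

theorem X_sub_C_dvd_one_sub_inv_eval_smul (hq : q.eval τ ≠ 0) :
    X - C τ ∣ 1 - (q.eval τ)⁻¹ • q := by
  rw [dvd_iff_isRoot]
  simp [hq]

variable {L : M} (hL : aeval L ((X - C τ) * q) = 0)
include hL

theorem pow_mul_spectralProj (n : ℕ) :
    L ^ n * spectralProj L τ q = τ ^ n • spectralProj L τ q := by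
  have h := aeval_eq_of_dvd_sub hL (f := X ^ n * ((q.eval τ)⁻¹ • q))
    (g := C (τ ^ n) * ((q.eval τ)⁻¹ • q))
    (by
      rw [← sub_mul, C_pow]
      exact mul_dvd_mul (sub_dvd_pow_sub_pow _ _ _) (dvd_smul_of_dvd _ dvd_rfl))
  simpa [spectralProj, Algebra.smul_def] using h

theorem spectralProj_mul_pow (n : ℕ) :
    spectralProj L τ q * L ^ n = τ ^ n • spectralProj L τ q := by
  have h := ((commute_X_pow ((q.eval τ)⁻¹ • q) n).map (aeval L)).eq
  simp only [map_pow, aeval_X] at h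
  rw [spectralProj, ← h, ← spectralProj, pow_mul_spectralProj hL]

theorem mul_one_sub_spectralProj_pow_mul (hq : q.eval τ ≠ 0) (n : ℕ) :
    (L * (1 - spectralProj L τ q)) ^ n * (1 - spectralProj L τ q) =
      L ^ n * (1 - spectralProj L τ q) := by
  unfold spectralProj
  set π := (q.eval τ)⁻¹ • q
  have h := aeval_eq_of_dvd_sub hL (f := (X * (1 - π)) ^ n * (1 - π)) (g := X ^ n * (1 - π)) ?_
  · simpa using h
  have hqπ : q ∣ (1 - π) ^ n - 1 := by
    refine (dvd_smul_of_dvd (q.eval τ)⁻¹ dvd_rfl : q ∣ π).trans ?_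
    simpa using sub_dvd_pow_sub_pow (1 - π) 1 n
  rw [show (X * (1 - π)) ^ n * (1 - π) - X ^ n * (1 - π) =
    X ^ n * ((1 - π) * ((1 - π) ^ n - 1)) by rw [mul_pow]; ring]
  exact dvd_mul_of_dvd_right (mul_dvd_mul (X_sub_C_dvd_one_sub_inv_eval_smul hq) hqπ) _

theorem aeval_mul_one_sub_spectralProj (hq : q.eval τ ≠ 0) :
    aeval (L * (1 - spectralProj L τ q)) (X * q) = 0 := by
  unfold spectralProj
  set π := (q.eval τ)⁻¹ • q
  have hqπ : q ∣ π := dvd_smul_of_dvd (q.eval τ)⁻¹ dvd_rfl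
  have hA : L * (1 - aeval L π) = aeval L (X * (1 - π)) := by simp
  rw [hA, ← aeval_comp]
  refine aeval_eq_zero_of_dvd_aeval_eq_zero ?_ hL
  rw [mul_comp, X_comp]
  refine mul_dvd_mul (dvd_mul_of_dvd_right (X_sub_C_dvd_one_sub_inv_eval_smul hq) _) ?_
  have hg : q ∣ X * (1 - π) - X := by
    rw [mul_sub, mul_one, sub_sub_cancel_left]
    exact dvd_neg.2 (dvd_mul_of_dvd_right hqπ _)
  exact dvd_sub_self_right.1 (hg.trans (sub_X_dvd_comp_sub q _))

end SpectralProjection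

theorem Matrix.aeval_mulVec_of_mulVec_eq_smul_s14 {n R : Type*} [Fintype n] [DecidableEq n]
    [CommRing R] {L : Matrix n n R} {u : n → R} {τ : R} (hu : L *ᵥ u = τ • u) (p : R[X]) :
    aeval L p *ᵥ u = p.eval τ • u := by
  induction p using Polynomial.induction_on with
  | C a => simp [Algebra.algebraMap_eq_smul_one, smul_mulVec]
  | add f g hf hg => rw [map_add, add_mulVec, hf, hg, eval_add, add_smul]
  | monomial m a ih =>
    rw [pow_succ, ← mul_assoc, map_mul, aeval_X, ← mulVec_mulVec, hu, mulVec_smul, ih, smul_smul,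
      eval_mul_X, mul_comm]

section MatrixSpectralProjection

variable {n K : Type*} [Fintype n] [DecidableEq n] [Field K]

theorem spectralProj_mulVec_of_mulVec_eq_smul {L : Matrix n n K} {u : n → K} {τ : K}
    {q : K[X]} (hq : q.eval τ ≠ 0) (hu : L *ᵥ u = τ • u) : spectralProj L τ q *ᵥ u = u := by
  rw [spectralProj, aeval_mulVec_of_mulVec_eq_smul_s14 hu, eval_smul, smul_eq_mul,
    inv_mul_cancel₀ hq, one_smul]

theorem pow_mulVec_eq_smul_spectralProj_mulVec_add {L : Matrix n n K} {τ : K} {q : K[X]}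
    (hL : aeval L ((X - C τ) * q) = 0) (hq : q.eval τ ≠ 0) (m : ℕ) (x : n → K) :
    L ^ m *ᵥ x = τ ^ m • (spectralProj L τ q *ᵥ x) +
      (L * (1 - spectralProj L τ q)) ^ m *ᵥ ((1 - spectralProj L τ q) *ᵥ x) := by
  rw [mulVec_mulVec, mul_one_sub_spectralProj_pow_mul hL hq, mul_sub, mul_one, sub_mulVec,
    pow_mul_spectralProj hL, smul_mulVec, add_sub_cancel]

end MatrixSpectralProjection

theorem exists_mulVec_eq_smul_of_isCyclicVec {k : ℕ} {L P : Matrix (Fin k) (Fin k) ℝ}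
    {x0 u : Fin k → ℝ} {τ : ℝ} (hx0 : IsCyclicVec L x0) (hP : ∀ j : ℕ, P * L ^ j = τ ^ j • P)
    (hu : P *ᵥ u = u) (hu0 : u ≠ 0) : ∃ c ≠ (0 : ℝ), P *ᵥ x0 = c • u := by
  have hspan : u ∈ Submodule.span ℝ {P *ᵥ x0} := by
    have hu_mem : u ∈ (⊤ : Submodule ℝ (Fin k → ℝ)).map P.mulVecLin := ⟨u, trivial, hu⟩
    rw [← hx0, Submodule.map_span] at hu_mem
    refine Submodule.span_le.2 ?_ hu_mem
    rintro _ ⟨_, ⟨j, rfl⟩, rfl⟩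
    rw [SetLike.mem_coe, mulVecLin_apply, mulVec_mulVec, hP, smul_mulVec]
    exact Submodule.smul_mem _ _ (Submodule.mem_span_singleton_self _)
  obtain ⟨d, hd⟩ := Submodule.mem_span_singleton.1 hspan
  have hd0 : d ≠ 0 := by
    rintro rfl
    exact hu0 (by rw [← hd, zero_smul])
  exact ⟨d⁻¹, inv_ne_zero hd0, by rw [← hd, smul_smul, inv_mul_cancel₀ hd0, one_smul]⟩

theorem spectralRadius_lt_of_aeval_eq_zero {A : Type*} [NormedRing A] [NormedAlgebra ℂ A]
    [CompleteSpace A] [Nontrivial A] {a : A} {p : ℂ[X]} (hp : aeval a p = 0) {r : ℝ}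
    (hroots : ∀ z, p.IsRoot z → ‖z‖ < r) : spectralRadius ℂ a < ENNReal.ofReal r := by
  refine spectrum.spectralRadius_lt_of_forall_lt a fun z hz => ?_
  have hz' := spectrum.subset_polynomial_aeval a p ⟨z, hz, rfl⟩
  rw [hp, spectrum.zero_eq, Set.mem_singleton_iff] at hz'
  exact Real.lt_toNNReal_iff_coe_lt.2 (hroots z hz')

theorem tendsto_norm_pow_div_pow_of_spectralRadius_lt {A : Type*} [NormedRing A]
    [NormedAlgebra ℂ A] [CompleteSpace A] (a : A) {r : ℝ}
    (h : spectralRadius ℂ a < ENNReal.ofReal r) :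
    Tendsto (fun n : ℕ => ‖a ^ n‖ / r ^ n) atTop (𝓝 0) := by
  obtain ⟨s, hρs, hsr⟩ := ENNReal.lt_iff_exists_nnreal_btwn.1 h
  have hr : 0 < r := ENNReal.ofReal_pos.1 (pos_of_gt hsr)
  have hsr' : (s : ℝ) < r := by
    rwa [← ENNReal.ofReal_coe_nnreal, ENNReal.ofReal_lt_ofReal_iff hr] at hsr
  have hbound : ∀ᶠ n in atTop, ‖a ^ n‖ ≤ (s : ℝ) ^ n := by
    have gelfand := spectrum.pow_nnnorm_pow_one_div_tendsto_nhds_spectralRadius a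
    filter_upwards [gelfand.eventually_lt_const hρs, eventually_ne_atTop 0] with n hn hn0
    rw [one_div, ← ENNReal.coe_rpow_of_nonneg _ (by positivity), ENNReal.coe_lt_coe] at hn
    have h := pow_le_pow_left₀ (by positivity) hn.le n
    rw [NNReal.rpow_inv_natCast_pow _ hn0] at h
    exact_mod_cast h
  refine squeeze_zero' (Eventually.of_forall fun n => by positivity) ?_
    (tendsto_pow_atTop_nhds_zero_of_lt_one (by positivity) ((div_lt_one hr).2 hsr'))
  filter_upwards [hbound] with n hn
  rw [div_pow]
  exact div_le_div_of_nonneg_right hn (by positivity)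

theorem norm_comp_ofReal {n : Type*} [Fintype n] (v : n → ℝ) :
    ‖fun i => (v i : ℂ)‖ = ‖v‖ := by
  simp [Pi.norm_def, Complex.nnnorm_real]

theorem Matrix.tendsto_inv_pow_smul_pow_mulVec {n : Type*} [Fintype n] [DecidableEq n]
    {A : Matrix n n ℝ} {p : ℝ[X]} (hp : aeval A p = 0) {r : ℝ}
    (hroots : ∀ z : ℂ, (p.map (algebraMap ℝ ℂ)).IsRoot z → ‖z‖ < r) (v : n → ℝ) :
    Tendsto (fun m : ℕ => (r ^ m)⁻¹ • (A ^ m *ᵥ v)) atTop (𝓝 0) := by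
  cases isEmpty_or_nonempty n
  · simp [Subsingleton.elim _ (0 : n → ℝ)]
  let _ : NormedRing (Matrix n n ℂ) := Matrix.linftyOpNormedRing
  let _ : NormedAlgebra ℂ (Matrix n n ℂ) := Matrix.linftyOpNormedAlgebra
  have : CompleteSpace (Matrix n n ℂ) := FiniteDimensional.complete ℂ _
  set B : Matrix n n ℂ := (Algebra.ofId ℝ ℂ).mapMatrix A
  have hB : aeval B (p.map (algebraMap ℝ ℂ)) = 0 := by
    rw [aeval_map_algebraMap, aeval_algHom_apply, hp, map_zero]
  have hρ := spectralRadius_lt_of_aeval_eq_zero hB hroots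
  have hr : 0 < r := ENNReal.ofReal_pos.1 (pos_of_gt hρ)
  have hlim := tendsto_norm_pow_div_pow_of_spectralRadius_lt B hρ
  refine squeeze_zero_norm (fun m => ?_) (by simpa using hlim.mul_const ‖v‖)
  have hBm : B ^ m = (A ^ m).map (algebraMap ℝ ℂ) := by
    rw [← map_pow, AlgHom.mapMatrix_apply]; rfl
  calc ‖(r ^ m)⁻¹ • (A ^ m *ᵥ v)‖ = ‖B ^ m *ᵥ fun i => (v i : ℂ)‖ / r ^ m := by
        rw [norm_smul, norm_inv, norm_pow, Real.norm_of_nonneg hr.le, inv_mul_eq_div,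
          ← norm_comp_ofReal, hBm]
        congr 2
        funext i
        exact RingHom.map_mulVec (algebraMap ℝ ℂ) _ _ i
    _ ≤ ‖B ^ m‖ / r ^ m * ‖v‖ := by
        rw [div_mul_eq_mul_div, ← norm_comp_ofReal v]
        gcongr
        exact Matrix.linfty_opNorm_mulVec (B ^ m) _

theorem exists_forall_pos_or_forall_neg_of_tendsto_smul {ι : Type*} [Finite ι]
    {f : ℕ → ι → ℝ} {s : ℕ → ℝ} {u : ι → ℝ} {c : ℝ} (hs : ∀ n, 0 < s n)
    (hf : Tendsto (fun n => s n • f n) atTop (𝓝 (c • u))) (hu : ∀ i, 0 < u i) (hc : c ≠ 0) :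
    ∃ N, (∀ n ≥ N, ∀ i, 0 < f n i) ∨ (∀ n ≥ N, ∀ i, f n i < 0) := by
  have hev : ∀ᶠ n in atTop, ∀ i, 0 < c * f n i := by
    refine eventually_all.2 fun i => ?_
    have hi : Tendsto (fun n => c * (s n * f n i)) atTop (𝓝 (c * (c * u i))) :=
      ((continuous_apply i).tendsto _ |>.comp hf).const_mul c
    have hlim : 0 < c * (c * u i) := by rw [← mul_assoc]; exact mul_pos (mul_self_pos.2 hc) (hu i)
    filter_upwards [hi.eventually_const_lt hlim] with n hn
    rw [mul_left_comm] at hn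
    exact (mul_pos_iff_of_pos_left (hs n)).1 hn
  obtain ⟨N, hN⟩ := eventually_atTop.1 hev
  rcases hc.lt_or_gt with hc | hc
  · exact ⟨N, Or.inr fun n hn i => neg_of_mul_pos_right (hN n hn i) hc.le⟩
  · exact ⟨N, Or.inl fun n hn i => pos_of_mul_pos_right (hN n hn i) hc.le⟩

/-- for a strong Perron–Frobenius matrix `L` and a cyclic vector
`x₀`, the entries of `Lⁿ x₀` eventually all have the same constant sign. -/
theorem entries_eventually_same_sign
    (k : ℕ) (L : Matrix (Fin k) (Fin k) ℝ) (τ : ℝ)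
    (hL : StrongPerronFrobenius L τ)
    (x0 : Fin k → ℝ) (hx0 : IsCyclicVec L x0) :
    ∃ N : ℕ,
      (∀ n ≥ N, ∀ i : Fin k, 0 < (L ^ n).mulVec x0 i) ∨
      (∀ n ≥ N, ∀ i : Fin k, (L ^ n).mulVec x0 i < 0) := by
  rcases isEmpty_or_nonempty (Fin k) with _ | ⟨⟨i₀⟩⟩
  · exact ⟨0, Or.inl fun _ _ i => isEmptyElim i⟩
  obtain ⟨hτ, hmult, hroots, u, hu, hLu⟩ := hL
  obtain ⟨q, hχ, hq⟩ := exists_eq_X_sub_C_mul_of_rootMultiplicity_eq_one hmult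
  have hLq : aeval L ((X - C τ) * q) = 0 := hχ ▸ L.aeval_self_charpoly
  set P := spectralProj L τ q
  obtain ⟨c, hc, hPx0⟩ := exists_mulVec_eq_smul_of_isCyclicVec hx0 (spectralProj_mul_pow hLq)
    (spectralProj_mulVec_of_mulVec_eq_smul hq hLu) fun h => (hu i₀).ne' (congrFun h i₀)
  have hdecay := tendsto_inv_pow_smul_pow_mulVec (aeval_mul_one_sub_spectralProj hLq hq)
    (norm_lt_of_isRoot_map_X_mul hτ hq (hχ ▸ hroots)) ((1 - P) *ᵥ x0)
  refine exists_forall_pos_or_forall_neg_of_tendsto_smul (fun n => inv_pos.2 (pow_pos hτ n)) ?_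
    hu hc
  have hsplit : ∀ n : ℕ, (τ ^ n)⁻¹ • (L ^ n *ᵥ x0) =
      c • u + (τ ^ n)⁻¹ • ((L * (1 - P)) ^ n *ᵥ ((1 - P) *ᵥ x0)) := fun n => by
    rw [pow_mulVec_eq_smul_spectralProj_mulVec_add hLq hq, hPx0, smul_add, smul_smul,
      inv_mul_cancel₀ (pow_ne_zero n hτ.ne'), one_smul]
  simpa [hsplit] using tendsto_const_nhds.add hdecay
end
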